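/- arXiv:1308.0257 — 3 statements merged into one kernel-verified Lean document; each statement's English description precedes it below -/
import Mathlib

section
/- Let f : ℝ → ℝ be smooth and let φ ∈ A_0. Then the family of functions y ↦ ∫_ℝ f(x) φ_ε(x − y) dx − f(y) is O(ε) locally, i.e., for every compact interval [a,b] there exist C > 0 and η > 0 such that |∫_ℝ f(x) φ_ε(x − y) dx − f(y)| ≤ C ε for all y ∈ [a,b] and all 0 < ε < η. -/
open MeasureTheory

/-- A test function: smooth with compact support. -/
def IsTestFunction (φ : ℝ → ℝ) : Prop :=
  ContDiff ℝ (⊤ : ℕ∞) φ ∧ HasCompactSupport φ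

/-- The scaled test function `φ_ε(x) = ε⁻¹ φ(x/ε)`. -/
noncomputable def scaled (φ : ℝ → ℝ) (ε : ℝ) : ℝ → ℝ :=
  fun x => ε⁻¹ * φ (x / ε)

/-- Membership in `A_q`: a test function with integral 1 whose moments of
order `1 ≤ r ≤ q` vanish. -/
def InA (q : ℕ) (φ : ℝ → ℝ) : Prop :=
  IsTestFunction φ ∧ (∫ z : ℝ, φ z) = 1 ∧
    ∀ r : ℕ, 1 ≤ r → r ≤ q → (∫ z : ℝ, z ^ r * φ z) = 0

/-- The family `g_ε` is `O(ε^k)` locally: on every compact interval `[a,b]`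
there are `C > 0` and `η > 0` with `|g_ε(y)| ≤ C ε^k` for `y ∈ [a,b]`,
`0 < ε < η`. -/
def IsLocallyBigO (g : ℝ → ℝ → ℝ) (k : ℤ) : Prop :=
  ∀ a b : ℝ, ∃ C > (0:ℝ), ∃ η > (0:ℝ), ∀ y ∈ Set.Icc a b,
    ∀ ε : ℝ, 0 < ε → ε < η → |g ε y| ≤ C * ε ^ k

/-- A generalised function `A` is null if for every `q` there is `p` such
that `A[φ_ε] = O(ε^q)` locally for all `φ ∈ A_p`. -/
def IsNull (A : (ℝ → ℝ) → ℝ → ℝ) : Prop :=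
  ∀ q : ℕ, ∃ p : ℕ, ∀ φ : ℝ → ℝ, InA p φ →
    IsLocallyBigO (fun ε y => A (scaled φ ε) y) (q : ℤ)

/-- A generalised function `A` is moderate if there is `N` such that
`A[φ_ε] = O(ε^{-N})` locally for all `φ ∈ A_0`. -/
def IsModerate (A : (ℝ → ℝ) → ℝ → ℝ) : Prop :=
  ∃ N : ℕ, ∀ φ : ℝ → ℝ, InA 0 φ →
    IsLocallyBigO (fun ε y => A (scaled φ ε) y) (-(N : ℤ))

theorem smoothing_minus_f_isBigO_eps
    (f φ : ℝ → ℝ) (hf : ContDiff ℝ (⊤ : ℕ∞) f) (hφ : InA 0 φ) :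
    IsLocallyBigO (fun ε y => (∫ x : ℝ, f x * scaled φ ε (x - y)) - f y) 1 := by
  obtain ⟨⟨hφs, hφc⟩, hφ1, -⟩ := hφ
  intro a b
  -- radius of support
  obtain ⟨r, hr⟩ := hφc.isBounded.subset_closedBall 0
  set R : ℝ := |r| + 1 with hRdef
  have hR0 : 0 < R := by positivity
  have hR : ∀ z : ℝ, R ≤ |z| → φ z = 0 := by
    intro z hz
    by_contra h
    have h1 : z ∈ tsupport φ := subset_tsupport φ h
    have h2 := hr h1
    simp only [Metric.mem_closedBall, Real.dist_eq, sub_zero] at h2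
    have : |z| ≤ |r| := le_trans h2 (le_abs_self r)
    linarith
  -- bound on derivative
  obtain ⟨M, hM⟩ := (isCompact_Icc (a := a - R) (b := b + R)).exists_bound_of_continuousOn
      ((hf.continuous_deriv (by simp)).continuousOn)
  set M' : ℝ := max M 0 with hM'def
  have hM'0 : 0 ≤ M' := le_max_right _ _
  set I : ℝ := ∫ z : ℝ, |z| * |φ z| with hIdef
  have hI0 : 0 ≤ I := integral_nonneg fun z => by positivity
  refine ⟨M' * I + 1, by positivity, 1, one_pos, ?_⟩
  intro y hy ε hε hε1
  have hε' : ε ≠ 0 := ne_of_gt hε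
  -- change of variables
  have key : (∫ x : ℝ, f x * scaled φ ε (x - y)) = ∫ z, f (ε * z + y) * φ z := by
    have h1 : (∫ x : ℝ, f x * scaled φ ε (x - y))
        = ∫ u : ℝ, f (u + y) * (ε⁻¹ * φ (u / ε)) := by
      rw [← integral_sub_right_eq_self (fun u => f (u + y) * (ε⁻¹ * φ (u / ε))) y]
      simp [scaled, sub_add_cancel]
    rw [h1]
    have h2 : ∀ u : ℝ, f (u + y) * (ε⁻¹ * φ (u / ε))
        = ε⁻¹ * ((fun z => f (ε * z + y) * φ z) (u / ε)) := by
      intro u; simp [mul_div_cancel₀, hε']; ring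
    simp_rw [h2]
    rw [integral_const_mul, Measure.integral_comp_div (fun z => f (ε * z + y) * φ z) ε,
      abs_of_pos hε, smul_eq_mul, ← mul_assoc, inv_mul_cancel₀ hε', one_mul]
  -- integrability facts
  have hcont : Continuous fun z : ℝ => f (ε * z + y) * φ z :=
    (hf.continuous.comp (by continuity)).mul hφs.continuous
  have hint1 : Integrable fun z : ℝ => f (ε * z + y) * φ z :=
    hcont.integrable_of_hasCompactSupport hφc.mul_left
  have hint2 : Integrable fun z : ℝ => f y * φ z :=
    (hφs.continuous.integrable_of_hasCompactSupport hφc).const_mul _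
  have hint3 : Integrable fun z : ℝ => M' * ε * (|z| * |φ z|) :=
    (((continuous_abs).mul hφs.continuous.abs).integrable_of_hasCompactSupport
      hφc.abs.mul_left).const_mul _
  have hfy : f y = ∫ z : ℝ, f y * φ z := by
    rw [integral_const_mul, hφ1, mul_one]
  simp only
  rw [key]
  have hdiff : (∫ z, f (ε * z + y) * φ z) - f y
      = ∫ z, (f (ε * z + y) - f y) * φ z := by
    have h3 : ∫ z, (f (ε * z + y) - f y) * φ z
        = (∫ z, f (ε * z + y) * φ z) - ∫ z, f y * φ z := by
      rw [← integral_sub hint1 hint2]; congr 1; ext z; ring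
    rw [h3, ← hfy]
  rw [hdiff]
  -- pointwise bound
  have hbound : ∀ z : ℝ, ‖(f (ε * z + y) - f y) * φ z‖ ≤ M' * ε * (|z| * |φ z|) := by
    intro z
    by_cases hz : φ z = 0
    · simp [hz]
    · have hzR : |z| < R := by
        by_contra h
        exact hz (hR z (le_of_not_gt h))
      have hεz : |ε * z| ≤ R := by
        rw [abs_mul, abs_of_pos hε]
        nlinarith [abs_nonneg z]
      have hεz' := abs_le.mp hεz
      have hmem1 : y ∈ Set.Icc (a - R) (b + R) :=
        ⟨by linarith [hy.1], by linarith [hy.2]⟩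
      have hmem2 : ε * z + y ∈ Set.Icc (a - R) (b + R) :=
        ⟨by linarith [hy.1, hεz'.1], by linarith [hy.2, hεz'.2]⟩
      have hlip := Convex.norm_image_sub_le_of_norm_deriv_le
          (f := f) (C := M') (s := Set.Icc (a - R) (b + R))
          (fun x _ => (hf.differentiable (by simp)).differentiableAt)
          (fun x hx => le_trans (hM x hx) (le_max_left M 0))
          (convex_Icc _ _) hmem1 hmem2
      rw [Real.norm_eq_abs] at hlip ⊢
      have h4 : |ε * z + y - y| = ε * |z| := by
        rw [add_sub_cancel_right, abs_mul, abs_of_pos hε]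
      rw [abs_mul]
      calc |f (ε * z + y) - f y| * |φ z| ≤ (M' * (ε * |z|)) * |φ z| := by
            apply mul_le_mul_of_nonneg_right _ (abs_nonneg _)
            rw [← h4]; exact hlip
        _ = M' * ε * (|z| * |φ z|) := by ring
  have hineq := norm_integral_le_of_norm_le hint3 (Filter.Eventually.of_forall hbound)
  rw [integral_const_mul, Real.norm_eq_abs] at hineq
  calc |∫ z, (f (ε * z + y) - f y) * φ z| ≤ M' * ε * I := hineq
    _ ≤ (M' * I + 1) * ε ^ (1:ℤ) := by
        rw [zpow_one]; nlinarith
end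

section
/- Let ψ : ℝ → ℝ be a test function with ∫_ℝ ψ(z) dz = 1, and let q ∈ ℕ. Then there exist real constants λ_0, λ_1, …, λ_q such that the function φ = λ_0 ψ + λ_1 ψ' + ⋯ + λ_q ψ^{(q)} satisfies ∫_ℝ φ(z) dz = 1 and ∫_ℝ z^r φ(z) dz = 0 for all integers 1 ≤ r ≤ q, i.e., φ ∈ A_q. -/
open MeasureTheory

noncomputable def moment (ψ : ℝ → ℝ) (i r : ℕ) : ℝ := ∫ z : ℝ, z ^ r * iteratedDeriv i ψ z

noncomputable def coeffs (m : ℕ → ℕ → ℝ) : ℕ → ℝ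
  | 0 => 1
  | r + 1 => -(∑ i ∈ (Finset.range (r + 1)).attach, coeffs m i * m i (r + 1)) /
      m (r + 1) (r + 1)
  termination_by r => r
  decreasing_by exact Finset.mem_range.mp i.2

variable {ψ : ℝ → ℝ}

lemma hcs_iter (h : HasCompactSupport ψ) (i : ℕ) : HasCompactSupport (iteratedDeriv i ψ) := by
  induction i with
  | zero => simpa [iteratedDeriv_zero]
  | succ n ih => rw [iteratedDeriv_succ]; exact ih.deriv

lemma cd_iter (h : ContDiff ℝ (⊤ : ℕ∞) ψ) (i : ℕ) : ContDiff ℝ (⊤ : ℕ∞) (iteratedDeriv i ψ) := by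
  have h1 : ContDiff ℝ (⊤ : ℕ∞) (iteratedFDeriv ℝ i ψ) :=
    h.iteratedFDeriv_right (by exact_mod_cast (le_top : ((⊤ : ℕ∞) + i) ≤ ⊤))
  have h2 := (ContinuousMultilinearMap.apply ℝ (fun _ : Fin i => ℝ) ℝ
      (fun _ => (1:ℝ))).contDiff (n := ((⊤ : ℕ∞) : WithTop ℕ∞))
  have h3 := h2.comp h1
  convert h3 using 1
  funext x
  exact iteratedDeriv_eq_iteratedFDeriv

lemma integrable_mom (hψ : IsTestFunction ψ) (i r : ℕ) :
    Integrable (fun z : ℝ => z ^ r * iteratedDeriv i ψ z) := by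
  apply Continuous.integrable_of_hasCompactSupport
  · exact (continuous_pow r).mul (cd_iter hψ.1 i).continuous
  · exact (hcs_iter hψ.2 i).mul_left

lemma parts (hψ : IsTestFunction ψ) (i r : ℕ) :
    moment ψ (i + 1) (r + 1) = -((r : ℝ) + 1) * moment ψ i r := by
  have hv : ∀ x : ℝ, HasDerivAt (iteratedDeriv i ψ) (iteratedDeriv (i + 1) ψ x) x := by
    intro x
    rw [iteratedDeriv_succ]
    exact (((cd_iter hψ.1 i).differentiable (by simp)) x).hasDerivAt
  have hu : ∀ x : ℝ, HasDerivAt (fun z : ℝ => z ^ (r + 1))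
      (((r : ℝ) + 1) * x ^ r) x := by
    intro x
    simpa using hasDerivAt_pow (r + 1) x
  have h := integral_mul_deriv_eq_deriv_mul_of_integrable (fun x _ => hu x) (fun x _ => hv x)
    (by simpa [Pi.mul_def] using integrable_mom hψ (i + 1) (r + 1))
    (by
      have := (integrable_mom hψ i r).const_mul ((r : ℝ) + 1)
      simpa [Pi.mul_def, mul_assoc] using this)
    (by simpa [Pi.mul_def] using integrable_mom hψ i (r + 1))
  rw [moment, h, moment]
  rw [← integral_const_mul]
  rw [← integral_neg]
  congr 1; ext x; ring

lemma parts0 (hψ : IsTestFunction ψ) (i : ℕ) : moment ψ (i + 1) 0 = 0 := by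
  have hv : ∀ x : ℝ, HasDerivAt (iteratedDeriv i ψ) (iteratedDeriv (i + 1) ψ x) x := by
    intro x
    rw [iteratedDeriv_succ]
    exact (((cd_iter hψ.1 i).differentiable (by simp)) x).hasDerivAt
  have hu : ∀ x : ℝ, HasDerivAt (fun _ : ℝ => (1:ℝ)) ((fun _ : ℝ => (0:ℝ)) x) x :=
    fun x => hasDerivAt_const x 1
  have h := integral_mul_deriv_eq_deriv_mul_of_integrable (fun x _ => hu x) (fun x _ => hv x)
    (by simpa [Pi.mul_def] using integrable_mom hψ (i + 1) 0)
    (by simp [Pi.mul_def])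
    (by simpa [Pi.mul_def] using integrable_mom hψ i 0)
  simpa [moment] using h

lemma moment_eq_zero (hψ : IsTestFunction ψ) : ∀ i r : ℕ, r < i → moment ψ i r = 0 := by
  intro i
  induction i with
  | zero => omega
  | succ n ih =>
    intro r hr
    match r with
    | 0 => exact parts0 hψ n
    | s + 1 => rw [parts hψ n s, ih s (by omega)]; ring

lemma moment_diag (hψ : IsTestFunction ψ) (hint : (∫ z : ℝ, ψ z) = 1) (r : ℕ) :
    moment ψ r r = (-1) ^ r * (r.factorial : ℝ) := by
  induction r with
  | zero => simpa [moment, iteratedDeriv_zero] using hint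
  | succ n ih =>
    rw [parts hψ n n, ih, Nat.factorial_succ]
    push_cast
    ring


lemma hcs_sum {ι : Type*} (s : Finset ι) (g : ι → ℝ → ℝ)
    (h : ∀ i ∈ s, HasCompactSupport (g i)) :
    HasCompactSupport (fun z => ∑ i ∈ s, g i z) := by
  classical
  induction s using Finset.induction_on with
  | empty =>
    simp only [Finset.sum_empty]
    rw [hasCompactSupport_def]
    simp
  | insert a t hnotmem ih =>
    simp only [Finset.sum_insert hnotmem]
    exact (h a (by simp)).add (ih fun i hi => h i (by simp [hi]))

lemma integrable_iter (hψ : IsTestFunction ψ) (i : ℕ) :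
    Integrable (iteratedDeriv i ψ) := by
  simpa using integrable_mom hψ i 0

lemma coeffs_succ (m : ℕ → ℕ → ℝ) (r : ℕ) :
    coeffs m (r + 1) =
      -(∑ i ∈ Finset.range (r + 1), coeffs m i * m i (r + 1)) / m (r + 1) (r + 1) := by
  rw [coeffs,
    Finset.sum_attach (Finset.range (r + 1)) (fun i => coeffs m i * m i (r + 1))]

lemma key_sum (hψ : IsTestFunction ψ) (hint : (∫ z : ℝ, ψ z) = 1) (q r : ℕ) (hr : r ≤ q) :
    ∑ i ∈ Finset.range (q + 1), coeffs (moment ψ) i * moment ψ i r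
      = if r = 0 then 1 else 0 := by
  have htrunc : ∑ i ∈ Finset.range (q + 1), coeffs (moment ψ) i * moment ψ i r
      = ∑ i ∈ Finset.range (r + 1), coeffs (moment ψ) i * moment ψ i r := by
    refine (Finset.sum_subset (Finset.range_subset_range.2 (by omega)) ?_).symm
    intro i hi hni
    rw [moment_eq_zero hψ i r (by simp only [Finset.mem_range] at hi hni; omega)]
    ring
  rw [htrunc]
  match r with
  | 0 =>
    simp [coeffs, moment, iteratedDeriv_zero, hint]
  | s + 1 =>
    rw [Finset.sum_range_succ, coeffs_succ]
    have hD : moment ψ (s + 1) (s + 1) ≠ 0 := by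
      rw [moment_diag hψ hint]
      positivity
    rw [div_mul_cancel₀ _ hD]
    simp

theorem exists_combination_in_A_q
    (ψ : ℝ → ℝ) (hψ : IsTestFunction ψ) (hint : (∫ z : ℝ, ψ z) = 1) (q : ℕ) :
    ∃ l : ℕ → ℝ,
      InA q (fun z => ∑ i ∈ Finset.range (q + 1), l i * iteratedDeriv i ψ z) := by
  set c := coeffs (moment ψ) with hc
  refine ⟨c, ⟨?_, ?_⟩, ?_, ?_⟩
  · exact ContDiff.sum fun i _ => contDiff_const.mul (cd_iter hψ.1 i)
  · exact hcs_sum _ _ fun i _ => (hcs_iter hψ.2 i).mul_left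
  · rw [integral_finset_sum _ fun i _ => (integrable_iter hψ i).const_mul _]
    have h1 : ∀ i ∈ Finset.range (q + 1),
        ∫ z : ℝ, c i * iteratedDeriv i ψ z = c i * moment ψ i 0 := by
      intro i _
      rw [integral_const_mul]
      congr 1
      simp [moment]
    rw [Finset.sum_congr rfl h1]
    simpa using key_sum hψ hint q 0 (by omega)
  · intro r hr1 hr2
    have h0 : (fun z : ℝ => z ^ r * ∑ i ∈ Finset.range (q + 1), c i * iteratedDeriv i ψ z)
        = fun z => ∑ i ∈ Finset.range (q + 1), c i * (z ^ r * iteratedDeriv i ψ z) := by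
      funext z
      rw [Finset.mul_sum]
      exact Finset.sum_congr rfl fun i _ => by ring
    rw [h0, integral_finset_sum _ fun i _ => (integrable_mom hψ i r).const_mul _]
    have h1 : ∀ i ∈ Finset.range (q + 1),
        ∫ z : ℝ, c i * (z ^ r * iteratedDeriv i ψ z) = c i * moment ψ i r :=
      fun i _ => integral_const_mul _ _
    rw [Finset.sum_congr rfl h1, key_sum hψ hint q r hr2, if_neg (by omega)]
end

section
/- Let φ : ℝ → ℝ be a test function and n ∈ ℕ. Then the n-th derivative of the function y ↦ φ_ε(−y) equals y ↦ (−1)^n ε^{−(n+1)} φ^{(n)}(−y/ε), and the family of these functions is O(ε^{−(n+1)}) locally; in particular (with n = 0) the family y ↦ φ_ε(−y) is O(ε^{−1}) locally, so the reflection map R[φ](y) = φ(−y), representing the Dirac delta, is moderate together with all its derivatives. -/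
open MeasureTheory

/-- Auxiliary: derivative formula for the reflected, scaled test function. -/
lemma aux_formula (φ : ℝ → ℝ) (hφ : ContDiff ℝ (⊤ : ℕ∞) φ) (n : ℕ) (ε : ℝ) (hε : 0 < ε) :
    iteratedDeriv n (fun y => ε⁻¹ * φ (-y / ε)) =
      fun y => (-1 : ℝ) ^ n * ε ^ (-((n : ℤ) + 1)) * iteratedDeriv n φ (-y / ε) := by
  have hε' : ε ≠ 0 := hε.ne'
  have hf : ContDiff ℝ n (fun x => ε⁻¹ * φ x) := (hφ.of_le (by exact_mod_cast le_top)).const_smul ε⁻¹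
  have key := iteratedDeriv_comp_const_mul hf (-ε⁻¹)
  have hD : ∀ x, iteratedDeriv n (fun x => ε⁻¹ * φ x) x = ε⁻¹ * iteratedDeriv n φ x := by
    intro x
    simp only [← iteratedDerivWithin_univ]
    exact iteratedDerivWithin_const_mul (Set.mem_univ x) uniqueDiffOn_univ ε⁻¹
      ((hφ.of_le (by exact_mod_cast le_top)).contDiffWithinAt)
  funext y
  have harg : ∀ y : ℝ, -y / ε = -ε⁻¹ * y := by
    intro y; rw [div_eq_mul_inv]; ring
  have : (fun y => ε⁻¹ * φ (-y / ε)) = fun y => (fun x => ε⁻¹ * φ x) (-ε⁻¹ * y) := by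
    funext y; rw [harg]
  rw [this, key]
  simp only [hD]
  rw [harg y]
  have hz : ε ^ (-((n : ℤ) + 1)) = (ε ^ (n + 1))⁻¹ := by
    rw [show -((n : ℤ) + 1) = -((n + 1 : ℕ) : ℤ) by push_cast; ring, zpow_neg, zpow_natCast]
  rw [hz, show (-ε⁻¹ : ℝ) = (-1) * ε⁻¹ by ring, mul_pow,
    show (ε ^ (n + 1))⁻¹ = ε⁻¹ ^ n * ε⁻¹ by rw [← inv_pow, ← pow_succ]]
  ring

/-- Auxiliary: a smooth compactly supported function has bounded iterated
derivatives. -/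
lemma aux_bound (φ : ℝ → ℝ) (h1 : ContDiff ℝ (⊤ : ℕ∞) φ) (h2 : HasCompactSupport φ) (n : ℕ) :
    ∃ M : ℝ, ∀ x, |iteratedDeriv n φ x| ≤ M := by
  have hcs : HasCompactSupport (iteratedDeriv n φ) := by
    have := (h2.iteratedFDeriv (𝕜 := ℝ) n).comp_left
      (g := fun L : ℝ[×n]→L[ℝ] ℝ => L (fun _ => 1)) rfl
    exact this
  obtain ⟨C, hC⟩ := hcs.exists_bound_of_continuous (h1.continuous_iteratedDeriv n (by exact_mod_cast le_top))
  exact ⟨C, fun x => by simpa using hC x⟩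

theorem delta_derivatives_moderate (φ : ℝ → ℝ) (hφ : IsTestFunction φ) (n : ℕ) :
    (∀ ε : ℝ, 0 < ε →
      iteratedDeriv n (fun y => scaled φ ε (-y)) =
        fun y => (-1 : ℝ) ^ n * ε ^ (-((n : ℤ) + 1)) * iteratedDeriv n φ (-y / ε)) ∧
    IsLocallyBigO (fun ε y => iteratedDeriv n (fun t => scaled φ ε (-t)) y)
      (-((n : ℤ) + 1)) ∧
    IsLocallyBigO (fun ε y => scaled φ ε (-y)) (-1) := by
  obtain ⟨h1, h2⟩ := hφ
  have hform : ∀ ε : ℝ, 0 < ε →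
      iteratedDeriv n (fun y => scaled φ ε (-y)) =
        fun y => (-1 : ℝ) ^ n * ε ^ (-((n : ℤ) + 1)) * iteratedDeriv n φ (-y / ε) := by
    intro ε hε
    simpa [scaled] using aux_formula φ h1 n ε hε
  refine ⟨hform, ?_, ?_⟩
  · obtain ⟨M, hM⟩ := aux_bound φ h1 h2 n
    intro a b
    refine ⟨max M 1, lt_max_of_lt_right one_pos, 1, one_pos, fun y _ ε hε _ => ?_⟩
    have := congrFun (hform ε hε) y
    show |iteratedDeriv n (fun t => scaled φ ε (-t)) y| ≤ _
    rw [this]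
    have hzp : (0:ℝ) < ε ^ (-((n : ℤ) + 1)) := zpow_pos hε _
    calc |(-1 : ℝ) ^ n * ε ^ (-((n : ℤ) + 1)) * iteratedDeriv n φ (-y / ε)|
        = ε ^ (-((n : ℤ) + 1)) * |iteratedDeriv n φ (-y / ε)| := by
          rw [abs_mul, abs_mul, abs_pow, abs_neg, abs_one, one_pow, one_mul,
            abs_of_pos hzp]
      _ ≤ ε ^ (-((n : ℤ) + 1)) * max M 1 := by
          exact mul_le_mul_of_nonneg_left ((hM _).trans (le_max_left _ _)) hzp.le
      _ = max M 1 * ε ^ (-((n : ℤ) + 1)) := mul_comm _ _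
  · obtain ⟨M, hM⟩ := aux_bound φ h1 h2 0
    simp only [iteratedDeriv_zero] at hM
    intro a b
    refine ⟨max M 1, lt_max_of_lt_right one_pos, 1, one_pos, fun y _ ε hε _ => ?_⟩
    have hzp : (0:ℝ) < ε⁻¹ := inv_pos.mpr hε
    rw [zpow_neg_one]
    calc |scaled φ ε (-y)| = ε⁻¹ * |φ (-y / ε)| := by
          rw [scaled, abs_mul, abs_of_pos hzp]
      _ ≤ ε⁻¹ * max M 1 :=
          mul_le_mul_of_nonneg_left ((hM _).trans (le_max_left _ _)) hzp.le
      _ = max M 1 * ε⁻¹ := mul_comm _ _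
end
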